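/- There exist two strictly positive joint distributions p = (p₀₀, p₀₁, p₁₀, p₁₁) and p' = (p'₀₀, p'₀₁, p'₁₀, p'₁₁) on {0,1}×{0,1}, each summing to 1 and having identical marginals (p₀₀ + p₀₁ = p'₀₀ + p'₀₁, p₀₀ + p₁₀ = p'₀₀ + p'₁₀, etc.), such that p₀₀ · p₁₁ > p₀₁ · p₁₀ while p'₀₀ · p'₁₁ < p'₀₁ · p'₁₀. Consequently, for all sufficiently small ε > 0, the margin-preserving diagonal move q(ε) = (·₀₀ + ε, ·₀₁ − ε, ·₁₀ − ε, ·₁₁ + ε) strictly increases the mutual information of p and strictly decreases the mutual information of p'. -/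

import Mathlib

/-!
Since the diagonal move preserves the marginals, `MI(q(ε)) + H(q(ε))` does not depend on `ε`,
so the derivative of `MI(q(ε))` at `ε = 0` is minus that of the joint entropy, namely the log
odds ratio `log (p₀₀ p₁₁) - log (p₀₁ p₁₀)`. Its sign decides whether `MI` increases or decreases
for small `ε > 0`, and it is not determined by the marginals: the tables `(2/5, 1/10, 1/10, 2/5)`
and `(1/10, 2/5, 2/5, 1/10)` share their marginals and have odds ratios on opposite sides of `1`.
-/

/-- Mutual information of the `ε`-perturbed 2×2 table
`q(ε) = (p₀₀+ε, p₀₁−ε, p₁₀−ε, p₁₁+ε)`, computed against the (unchanged)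
marginals `a₀ = p₀₀+p₀₁`, `a₁ = p₁₀+p₁₁`, `b₀ = p₀₀+p₁₀`, `b₁ = p₀₁+p₁₁`. -/
noncomputable def mi2x2 (p00 p01 p10 p11 ε : ℝ) : ℝ :=
  (p00 + ε) * Real.log ((p00 + ε) / ((p00 + p01) * (p00 + p10))) +
  (p01 - ε) * Real.log ((p01 - ε) / ((p00 + p01) * (p01 + p11))) +
  (p10 - ε) * Real.log ((p10 - ε) / ((p10 + p11) * (p00 + p10))) +
  (p11 + ε) * Real.log ((p11 + ε) / ((p10 + p11) * (p01 + p11)))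

open Real Filter Topology

theorem HasDerivAt.eventually_lt_of_deriv_pos {f : ℝ → ℝ} {f' x : ℝ} (hf : HasDerivAt f f' x)
    (hf' : 0 < f') : ∀ᶠ y in 𝓝[>] x, f x < f y := by
  filter_upwards [(hf.tendsto_slope.mono_left (nhdsGT_le_nhdsNE x)).eventually
    (eventually_gt_nhds hf'), self_mem_nhdsWithin] with y hslope hxy
  exact (slope_pos_iff hxy).1 hslope

theorem HasDerivAt.eventually_gt_of_deriv_neg {f : ℝ → ℝ} {f' x : ℝ} (hf : HasDerivAt f f' x)
    (hf' : f' < 0) : ∀ᶠ y in 𝓝[>] x, f y < f x := by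
  simpa using hf.neg.eventually_lt_of_deriv_pos (neg_pos.2 hf')

theorem Real.mul_log_div_eq (x : ℝ) {c : ℝ} (hc : c ≠ 0) :
    x * log (x / c) = x * log x - x * log c := by
  rcases eq_or_ne x 0 with rfl | hx
  · simp
  · rw [log_div hx hc]
    ring

noncomputable def jointEntropy2x2 (p00 p01 p10 p11 ε : ℝ) : ℝ :=
  negMulLog (p00 + ε) + negMulLog (p01 - ε) + negMulLog (p10 - ε) + negMulLog (p11 + ε)

section DiagonalMove

variable {p00 p01 p10 p11 : ℝ}

theorem mi2x2_sub_mi2x2_zero (ha₀ : p00 + p01 ≠ 0) (ha₁ : p10 + p11 ≠ 0)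
    (hb₀ : p00 + p10 ≠ 0) (hb₁ : p01 + p11 ≠ 0) (ε : ℝ) :
    mi2x2 p00 p01 p10 p11 ε - mi2x2 p00 p01 p10 p11 0 =
      jointEntropy2x2 p00 p01 p10 p11 0 - jointEntropy2x2 p00 p01 p10 p11 ε := by
  simp only [mi2x2, jointEntropy2x2, negMulLog, mul_log_div_eq _ (mul_ne_zero ha₀ hb₀),
    mul_log_div_eq _ (mul_ne_zero ha₀ hb₁), mul_log_div_eq _ (mul_ne_zero ha₁ hb₀),
    mul_log_div_eq _ (mul_ne_zero ha₁ hb₁), log_mul ha₀ hb₀, log_mul ha₀ hb₁, log_mul ha₁ hb₀,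
    log_mul ha₁ hb₁]
  ring

theorem hasDerivAt_jointEntropy2x2 (h00 : p00 ≠ 0) (h01 : p01 ≠ 0) (h10 : p10 ≠ 0)
    (h11 : p11 ≠ 0) :
    HasDerivAt (jointEntropy2x2 p00 p01 p10 p11)
      (log p01 + log p10 - log p00 - log p11) 0 := by
  have hplus {p : ℝ} (hp : p ≠ 0) : HasDerivAt (fun ε ↦ negMulLog (p + ε)) (-log p - 1) 0 := by
    simpa using (hasDerivAt_negMulLog (by simpa using hp)).comp_const_add p 0
  have hminus {p : ℝ} (hp : p ≠ 0) : HasDerivAt (fun ε ↦ negMulLog (p - ε)) (1 + log p) 0 := by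
    simpa using (hasDerivAt_negMulLog (by simpa using hp)).comp_const_sub p 0
  exact ((((hplus h00).add (hminus h01)).add (hminus h10)).add (hplus h11)).congr_deriv (by ring)

theorem hasDerivAt_mi2x2 (h00 : 0 < p00) (h01 : 0 < p01) (h10 : 0 < p10) (h11 : 0 < p11) :
    HasDerivAt (mi2x2 p00 p01 p10 p11) (log (p00 * p11) - log (p01 * p10)) 0 := by
  have hdiff := mi2x2_sub_mi2x2_zero (p00 := p00) (p01 := p01) (p10 := p10) (p11 := p11)
    (by positivity) (by positivity) (by positivity) (by positivity)
  have hfun : mi2x2 p00 p01 p10 p11 = fun ε ↦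
      mi2x2 p00 p01 p10 p11 0 + jointEntropy2x2 p00 p01 p10 p11 0 -
        jointEntropy2x2 p00 p01 p10 p11 ε := by
    funext ε
    linarith [hdiff ε]
  rw [hfun]
  refine ((hasDerivAt_jointEntropy2x2 h00.ne' h01.ne' h10.ne' h11.ne').const_sub _).congr_deriv ?_
  rw [log_mul h00.ne' h11.ne', log_mul h01.ne' h10.ne']
  ring

theorem eventually_mi2x2_zero_lt (h00 : 0 < p00) (h01 : 0 < p01) (h10 : 0 < p10)
    (h11 : 0 < p11) (hodds : p01 * p10 < p00 * p11) :
    ∀ᶠ ε in 𝓝[>] 0, mi2x2 p00 p01 p10 p11 0 < mi2x2 p00 p01 p10 p11 ε :=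
  (hasDerivAt_mi2x2 h00 h01 h10 h11).eventually_lt_of_deriv_pos
    (sub_pos.2 (log_lt_log (by positivity) hodds))

theorem eventually_mi2x2_lt_zero (h00 : 0 < p00) (h01 : 0 < p01) (h10 : 0 < p10)
    (h11 : 0 < p11) (hodds : p00 * p11 < p01 * p10) :
    ∀ᶠ ε in 𝓝[>] 0, mi2x2 p00 p01 p10 p11 ε < mi2x2 p00 p01 p10 p11 0 :=
  (hasDerivAt_mi2x2 h00 h01 h10 h11).eventually_gt_of_deriv_neg
    (sub_neg.2 (log_lt_log (by positivity) hodds))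

end DiagonalMove

/-- There exist two strictly positive 2×2 joint distributions `p` and `p'`,
each summing to 1 and with identical marginals, such that
`p₀₀·p₁₁ > p₀₁·p₁₀` while `p'₀₀·p'₁₁ < p'₀₁·p'₁₀`; consequently, for all
sufficiently small `ε > 0`, the same margin-preserving diagonal mass move
strictly increases the mutual information of `p` and strictly decreases the
mutual information of `p'`.  Hence no local rule can guarantee an MI increase. -/
theorem exists_backgrounds_mi_opposite :
    ∃ p00 p01 p10 p11 p00' p01' p10' p11' : ℝ,
      0 < p00 ∧ 0 < p01 ∧ 0 < p10 ∧ 0 < p11 ∧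
      0 < p00' ∧ 0 < p01' ∧ 0 < p10' ∧ 0 < p11' ∧
      p00 + p01 + p10 + p11 = 1 ∧
      p00' + p01' + p10' + p11' = 1 ∧
      p00 + p01 = p00' + p01' ∧
      p10 + p11 = p10' + p11' ∧
      p00 + p10 = p00' + p10' ∧
      p01 + p11 = p01' + p11' ∧
      p00 * p11 > p01 * p10 ∧
      p00' * p11' < p01' * p10' ∧
      ∃ ε₀ > 0, ∀ ε : ℝ, 0 < ε → ε < ε₀ →
        mi2x2 p00 p01 p10 p11 ε > mi2x2 p00 p01 p10 p11 0 ∧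
        mi2x2 p00' p01' p10' p11' ε < mi2x2 p00' p01' p10' p11' 0 := by
  have hup := eventually_mi2x2_zero_lt (p00 := 2 / 5) (p01 := 1 / 10) (p10 := 1 / 10)
    (p11 := 2 / 5) (by norm_num) (by norm_num) (by norm_num) (by norm_num) (by norm_num)
  have hdown := eventually_mi2x2_lt_zero (p00 := 1 / 10) (p01 := 2 / 5) (p10 := 2 / 5)
    (p11 := 1 / 10) (by norm_num) (by norm_num) (by norm_num) (by norm_num) (by norm_num)
  obtain ⟨ε₀, hε₀, hsub⟩ := mem_nhdsGT_iff_exists_Ioo_subset.1 (hup.and hdown)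
  refine ⟨2 / 5, 1 / 10, 1 / 10, 2 / 5, 1 / 10, 2 / 5, 2 / 5, 1 / 10,
    ?_, ?_, ?_, ?_, ?_, ?_, ?_, ?_, ?_, ?_, ?_, ?_, ?_, ?_, ?_, ?_,
    ε₀, hε₀, fun ε hε hεε₀ ↦ hsub ⟨hε, hεε₀⟩⟩ <;> norm_num
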